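/- arXiv:1412.1373 — 2 statements merged into one kernel-verified Lean document; each statement's English description precedes it below -/
import Mathlib

section
/- Let p ≥ 1, let Σ : ℝ^p → PD_p(ℝ) assign to each point a real positive definite p×p matrix, and let t > 0. Then the non-stationary Gaussian kernel K(x,y) = φ_xy exp(−Q_xy(x−y)/t²) is positive semidefinite on ℝ^p × ℝ^p: for every n ∈ ℕ, all points x_1, …, x_n ∈ ℝ^p and all real coefficients c_1, …, c_n, ∑_{i,j} c_i c_j K(x_i, x_j) ≥ 0. -/
/-!
With `g_x` the normal density centred at `x` with covariance `(t² / 4) Σ_x`, the convolution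
identity `∫ N(z; x, A) N(z; y, B) dz = N(x; y, A + B)` gives `K(x, y) = κ a_x a_y ∫ g_x g_y` with
`a_x = det(Σ_x)^{1/4}` and a constant `κ > 0`, so that
`∑ c_i c_j K(x_i, x_j) = κ ∫ (∑ c_i a_{x_i} g_{x_i})² ≥ 0`. The convolution identity comes from
completing the square in `z` and from `∫ exp (-zᵀ M z) dz = √(π ^ p / det M)`, which the
substitution `M = Bᵀ B` reduces to the standard Gaussian integral.
-/

open MeasureTheory Matrix Real

/-- `Q_xy(h) = hᵀ ((Σx+Σy)/2)⁻¹ h`. -/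
noncomputable def Qform {p : ℕ} (A B : Matrix (Fin p) (Fin p) ℝ) (h : Fin p → ℝ) : ℝ :=
  h ⬝ᵥ ((((2:ℝ)⁻¹ • (A + B))⁻¹).mulVec h)

/-- `φ_xy = det(Σx)^{1/4} det(Σy)^{1/4} det((Σx+Σy)/2)^{-1/2}`. -/
noncomputable def phiFactor {p : ℕ} (A B : Matrix (Fin p) (Fin p) ℝ) : ℝ :=
  A.det ^ ((1:ℝ) / 4) * B.det ^ ((1:ℝ) / 4) * ((2:ℝ)⁻¹ • (A + B)).det ^ (-(1:ℝ) / 2)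

section MatrixAlgebra
variable {ι : Type*} [Fintype ι]

lemma Matrix.IsSymm.dotProduct_mulVec_comm {M : Matrix ι ι ℝ} (hM : M.IsSymm) (u v : ι → ℝ) :
    u ⬝ᵥ M *ᵥ v = v ⬝ᵥ M *ᵥ u := by
  rw [dotProduct_mulVec, ← mulVec_transpose, hM.eq, dotProduct_comm]

lemma Matrix.IsSymm.sub_dotProduct_mulVec_sub {M : Matrix ι ι ℝ} (hM : M.IsSymm) (u v : ι → ℝ) :
    (u - v) ⬝ᵥ M *ᵥ (u - v) = u ⬝ᵥ M *ᵥ u - 2 * (u ⬝ᵥ M *ᵥ v) + v ⬝ᵥ M *ᵥ v := by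
  rw [mulVec_sub, sub_dotProduct, dotProduct_sub, dotProduct_sub, hM.dotProduct_mulVec_comm v u]
  ring

variable [DecidableEq ι] {A B P Q : Matrix ι ι ℝ}

lemma Matrix.IsSymm.complete_square (hA : A.IsSymm) (hB : B.IsSymm) (hAB : IsUnit (A + B).det)
    (z h : ι → ℝ) :
    (z - h) ⬝ᵥ A *ᵥ (z - h) + z ⬝ᵥ B *ᵥ z =
      (z - (A + B)⁻¹ *ᵥ A *ᵥ h) ⬝ᵥ (A + B) *ᵥ (z - (A + B)⁻¹ *ᵥ A *ᵥ h) +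
        h ⬝ᵥ (A - A * (A + B)⁻¹ * A) *ᵥ h := by
  set m := (A + B)⁻¹ *ᵥ A *ᵥ h
  have hm : (A + B) *ᵥ m = A *ᵥ h := by
    rw [mulVec_mulVec, mul_nonsing_inv _ hAB, one_mulVec]
  have hrem : h ⬝ᵥ (A - A * (A + B)⁻¹ * A) *ᵥ h = h ⬝ᵥ A *ᵥ h - m ⬝ᵥ A *ᵥ h := by
    rw [sub_mulVec, dotProduct_sub, ← mulVec_mulVec, ← mulVec_mulVec]
    exact congrArg _ (hA.dotProduct_mulVec_comm h m)
  rw [hA.sub_dotProduct_mulVec_sub, (hA.add hB).sub_dotProduct_mulVec_sub, hm, hrem, add_mulVec,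
    dotProduct_add]
  ring

lemma Matrix.inv_inv_add_inv (hP : IsUnit P.det) (hQ : IsUnit Q.det) :
    (P⁻¹ + Q⁻¹)⁻¹ = Q * (P + Q)⁻¹ * P := by
  rw [inv_add_inv (by simp_all [isUnit_iff_isUnit_det]), mul_inv_rev, mul_inv_rev,
    nonsing_inv_nonsing_inv _ hP, nonsing_inv_nonsing_inv _ hQ, Matrix.mul_assoc]

lemma Matrix.inv_sub_inv_mul_inv_add_inv_inv_mul_inv (hP : IsUnit P.det) (hQ : IsUnit Q.det)
    (hPQ : IsUnit (P + Q).det) : P⁻¹ - P⁻¹ * (P⁻¹ + Q⁻¹)⁻¹ * P⁻¹ = (P + Q)⁻¹ := by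
  have hcancel : P⁻¹ * (Q * (P + Q)⁻¹ * P) * P⁻¹ = P⁻¹ * Q * (P + Q)⁻¹ := by
    simp only [Matrix.mul_assoc, mul_nonsing_inv _ hP, Matrix.mul_one]
  have hsplit : P⁻¹ = (P + Q)⁻¹ + P⁻¹ * Q * (P + Q)⁻¹ := calc
    P⁻¹ = P⁻¹ * (P + Q) * (P + Q)⁻¹ := by
      rw [Matrix.mul_assoc, mul_nonsing_inv _ hPQ, Matrix.mul_one]
    _ = (P + Q)⁻¹ + P⁻¹ * Q * (P + Q)⁻¹ := by
      rw [Matrix.mul_add, nonsing_inv_mul _ hP, Matrix.add_mul, Matrix.one_mul]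
  rw [inv_inv_add_inv hP hQ, hcancel, sub_eq_iff_eq_add, ← hsplit]

lemma Matrix.det_mul_det_eq_det_add_mul_det_inv_add_inv_inv (hP : IsUnit P.det) (hQ : IsUnit Q.det)
    (hPQ : IsUnit (P + Q).det) :
    P.det * Q.det = (P + Q).det * (P⁻¹ + Q⁻¹)⁻¹.det := by
  have := hPQ.ne_zero
  rw [inv_inv_add_inv hP hQ, det_mul, det_mul, det_nonsing_inv, Ring.inverse_eq_inv']
  field_simp

end MatrixAlgebra

section ChangeOfVariables
variable {ι : Type*} [Fintype ι] [DecidableEq ι] {B : Matrix ι ι ℝ}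

lemma Matrix.measurableEmbedding_mulVec (hB : B.det ≠ 0) : MeasurableEmbedding (B *ᵥ ·) :=
  ((LinearMap.equivOfDetNeZero (toLin' B) (by rwa [LinearMap.det_toLin'])).toContinuousLinearEquiv
    |>.toHomeomorph.measurableEmbedding)

lemma Matrix.map_mulVec_volume (hB : B.det ≠ 0) :
    Measure.map (B *ᵥ ·) volume = ENNReal.ofReal |B.det|⁻¹ • (volume : Measure (ι → ℝ)) := by
  have := Real.map_linearMap_volume_pi_eq_smul_volume_pi (f := toLin' B)
    (by rwa [LinearMap.det_toLin'])
  rwa [LinearMap.det_toLin', abs_inv] at this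

lemma Matrix.integral_comp_mulVec (hB : B.det ≠ 0) (g : (ι → ℝ) → ℝ) :
    ∫ z, g (B *ᵥ z) = |B.det|⁻¹ * ∫ z, g z := by
  rw [← (measurableEmbedding_mulVec hB).integral_map, map_mulVec_volume hB, integral_smul_measure,
    ENNReal.toReal_ofReal (by positivity), smul_eq_mul]

lemma Matrix.integrable_comp_mulVec (hB : B.det ≠ 0) {g : (ι → ℝ) → ℝ} (hg : Integrable g) :
    Integrable (fun z ↦ g (B *ᵥ z)) :=
  (measurableEmbedding_mulVec hB).integrable_map_iff.mp <| by
    rw [map_mulVec_volume hB]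
    exact hg.smul_measure ENNReal.ofReal_ne_top

end ChangeOfVariables

section StandardGaussian
variable {ι : Type*} [Fintype ι]

lemma exp_neg_dotProduct_self_eq_prod (w : ι → ℝ) :
    exp (-(w ⬝ᵥ w)) = ∏ i, exp (-1 * w i ^ 2) := by
  simp [dotProduct, ← exp_sum, sq]

lemma integral_exp_neg_dotProduct_self :
    ∫ w : ι → ℝ, exp (-(w ⬝ᵥ w)) = √(π ^ Fintype.card ι) := by
  simp_rw [exp_neg_dotProduct_self_eq_prod]
  rw [integral_fintype_prod_volume_eq_pow (fun x : ℝ ↦ exp (-1 * x ^ 2)), integral_gaussian,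
    div_one, ← Real.sqrt_sq (pow_nonneg (sqrt_nonneg π) _), ← pow_mul, mul_comm, pow_mul,
    sq_sqrt pi_pos.le]

lemma integrable_exp_neg_dotProduct_self : Integrable (fun w : ι → ℝ ↦ exp (-(w ⬝ᵥ w))) := by
  simp_rw [exp_neg_dotProduct_self_eq_prod]
  exact Integrable.fintype_prod fun _ ↦ integrable_exp_neg_mul_sq one_pos

end StandardGaussian

section PosDefGaussian
open scoped MatrixOrder
variable {ι : Type*} [Fintype ι] [DecidableEq ι] {M : Matrix ι ι ℝ}

lemma Matrix.PosSemidef.exists_dotProduct_mulVec_eq (hM : M.PosSemidef) :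
    ∃ B : Matrix ι ι ℝ, B.det ^ 2 = M.det ∧ ∀ z, z ⬝ᵥ M *ᵥ z = (B *ᵥ z) ⬝ᵥ (B *ᵥ z) := by
  obtain ⟨B, rfl⟩ := CStarAlgebra.nonneg_iff_eq_star_mul_self.mp hM.nonneg
  refine ⟨B, ?_, fun z ↦ ?_⟩
  · rw [det_mul, star_eq_conjTranspose, det_conjTranspose, star_trivial, sq]
  · rw [← mulVec_mulVec, dotProduct_mulVec, star_eq_conjTranspose,
      conjTranspose_eq_transpose_of_trivial, vecMul_transpose]

lemma Matrix.PosDef.integral_exp_neg_dotProduct_mulVec (hM : M.PosDef) :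
    ∫ z, exp (-(z ⬝ᵥ M *ᵥ z)) = √(π ^ Fintype.card ι / M.det) := by
  obtain ⟨B, hdet, hquad⟩ := hM.posSemidef.exists_dotProduct_mulVec_eq
  have hB : B.det ≠ 0 := fun h ↦ by simp [h, hM.det_pos.ne] at hdet
  simp_rw [hquad]
  rw [integral_comp_mulVec hB (fun w ↦ exp (-(w ⬝ᵥ w))), integral_exp_neg_dotProduct_self,
    ← hdet, sqrt_div (by positivity), sqrt_sq_eq_abs, inv_mul_eq_div]

lemma Matrix.PosDef.integrable_exp_neg_dotProduct_mulVec (hM : M.PosDef) :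
    Integrable (fun z ↦ exp (-(z ⬝ᵥ M *ᵥ z))) := by
  obtain ⟨B, hdet, hquad⟩ := hM.posSemidef.exists_dotProduct_mulVec_eq
  have hB : B.det ≠ 0 := fun h ↦ by simp [h, hM.det_pos.ne] at hdet
  simp_rw [hquad]
  exact integrable_comp_mulVec hB integrable_exp_neg_dotProduct_self

end PosDefGaussian

lemma sum_sum_mul_integral_mul_nonneg {α ι : Type*} [MeasurableSpace α] {μ : Measure α}
    [Fintype ι] {f : ι → α → ℝ} (hf : ∀ i j, Integrable (fun a ↦ f i a * f j a) μ) (c : ι → ℝ) :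
    0 ≤ ∑ i, ∑ j, c i * c j * ∫ a, f i a * f j a ∂μ := by
  have hsq : ∫ a, (∑ i, c i * f i a) ^ 2 ∂μ = ∑ i, ∑ j, c i * c j * ∫ a, f i a * f j a ∂μ := calc
    ∫ a, (∑ i, c i * f i a) ^ 2 ∂μ = ∫ a, ∑ i, ∑ j, c i * c j * (f i a * f j a) ∂μ := by
      simp_rw [sq, Finset.sum_mul_sum, mul_mul_mul_comm]
    _ = ∑ i, ∑ j, c i * c j * ∫ a, f i a * f j a ∂μ := by
      simp_rw [← integral_const_mul]
      rw [integral_finsetSum _ fun i _ ↦ integrable_finsetSum _ fun j _ ↦ (hf i j).const_mul _]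
      exact Finset.sum_congr rfl fun i _ ↦
        integral_finsetSum _ fun j _ ↦ (hf i j).const_mul _
  rw [← hsq]
  exact integral_nonneg fun _ ↦ sq_nonneg _

lemma exp_neg_div_sqrt_mul_exp_neg_div_sqrt (a b : ℝ) {x : ℝ} (hx : 0 ≤ x) (y : ℝ) :
    exp (-a) / √x * (exp (-b) / √y) = exp (-(a + b)) / √(x * y) := by
  rw [sqrt_mul hx, neg_add, exp_add]
  ring

section GaussianDensity
variable {ι : Type*} [Fintype ι] [DecidableEq ι] {P Q : Matrix ι ι ℝ}

/-- The density of the centred normal distribution with covariance `P / 2`. -/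
noncomputable def gaussianDensity (P : Matrix ι ι ℝ) (u : ι → ℝ) : ℝ :=
  exp (-(u ⬝ᵥ P⁻¹ *ᵥ u)) / √(π • P).det

lemma Matrix.PosDef.integral_gaussianDensity_sub (hP : P.PosDef) (m : ι → ℝ) :
    ∫ z, gaussianDensity P (z - m) = 1 := by
  unfold gaussianDensity
  rw [integral_div, integral_sub_right_eq_self (fun z ↦ exp (-(z ⬝ᵥ P⁻¹ *ᵥ z))),
    hP.inv.integral_exp_neg_dotProduct_mulVec, det_nonsing_inv, Ring.inverse_eq_inv',
    div_inv_eq_mul, det_smul, div_self (sqrt_pos.mpr (by have := hP.det_pos; positivity)).ne']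

lemma Matrix.PosDef.integrable_gaussianDensity_sub (hP : P.PosDef) (m : ι → ℝ) :
    Integrable (fun z ↦ gaussianDensity P (z - m)) :=
  (hP.inv.integrable_exp_neg_dotProduct_mulVec.comp_sub_right m).div_const _

lemma Matrix.PosDef.gaussianDensity_sub_mul_gaussianDensity_sub (hP : P.PosDef) (hQ : Q.PosDef)
    (x y z : ι → ℝ) :
    gaussianDensity P (z - x) * gaussianDensity Q (z - y) =
      gaussianDensity (P + Q) (x - y) * gaussianDensity (P⁻¹ + Q⁻¹)⁻¹
        (z - (y + (P⁻¹ + Q⁻¹)⁻¹ *ᵥ P⁻¹ *ᵥ (x - y))) := by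
  have hC : (P⁻¹ + Q⁻¹).PosDef := hP.inv.add hQ.inv
  have hexp := (isHermitian_iff_isSymm.mp hP.inv.isHermitian).complete_square
    (isHermitian_iff_isSymm.mp hQ.inv.isHermitian) hC.det_pos.ne'.isUnit (z - y) (x - y)
  rw [sub_sub_sub_cancel_right, inv_sub_inv_mul_inv_add_inv_inv_mul_inv hP.det_pos.ne'.isUnit
    hQ.det_pos.ne'.isUnit (hP.add hQ).det_pos.ne'.isUnit, sub_sub] at hexp
  have hdet : (π • P).det * (π • Q).det = (π • (P + Q)).det * (π • (P⁻¹ + Q⁻¹)⁻¹).det := by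
    simp only [det_smul]
    linear_combination (π ^ Fintype.card ι) ^ 2 * det_mul_det_eq_det_add_mul_det_inv_add_inv_inv
      hP.det_pos.ne'.isUnit hQ.det_pos.ne'.isUnit (hP.add hQ).det_pos.ne'.isUnit
  unfold gaussianDensity
  rw [nonsing_inv_nonsing_inv _ hC.det_pos.ne'.isUnit,
    exp_neg_div_sqrt_mul_exp_neg_div_sqrt _ _ (hP.smul pi_pos).det_pos.le,
    exp_neg_div_sqrt_mul_exp_neg_div_sqrt _ _ ((hP.add hQ).smul pi_pos).det_pos.le, hexp, hdet,
    add_comm]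

theorem Matrix.PosDef.integral_gaussianDensity_sub_mul_gaussianDensity_sub (hP : P.PosDef)
    (hQ : Q.PosDef) (x y : ι → ℝ) :
    ∫ z, gaussianDensity P (z - x) * gaussianDensity Q (z - y) =
      gaussianDensity (P + Q) (x - y) := by
  simp_rw [hP.gaussianDensity_sub_mul_gaussianDensity_sub hQ x y]
  rw [integral_const_mul, (hP.inv.add hQ.inv).inv.integral_gaussianDensity_sub, mul_one]

lemma Matrix.PosDef.integrable_gaussianDensity_sub_mul_gaussianDensity_sub (hP : P.PosDef)
    (hQ : Q.PosDef) (x y : ι → ℝ) :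
    Integrable (fun z ↦ gaussianDensity P (z - x) * gaussianDensity Q (z - y)) := by
  simp_rw [hP.gaussianDensity_sub_mul_gaussianDensity_sub hQ x y]
  exact ((hP.inv.add hQ.inv).inv.integrable_gaussianDensity_sub _).const_mul _

end GaussianDensity

lemma phiFactor_mul_exp_eq {p : ℕ} {A B : Matrix (Fin p) (Fin p) ℝ} (hA : A.PosDef) (hB : B.PosDef)
    {t : ℝ} (ht : t ≠ 0) (h : Fin p → ℝ) :
    phiFactor A B * exp (-(Qform A B h) / t ^ 2) =
      √((π * t ^ 2) ^ p) * (A.det ^ ((1:ℝ) / 4) * B.det ^ ((1:ℝ) / 4)) *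
        gaussianDensity ((t ^ 2 / 2) • A + (t ^ 2 / 2) • B) h := by
  set M := (2:ℝ)⁻¹ • (A + B)
  have hM : M.PosDef := (hA.add hB).smul (by norm_num)
  have hsum : (t ^ 2 / 2) • A + (t ^ 2 / 2) • B = t ^ 2 • M := by
    rw [smul_smul, ← smul_add, div_eq_mul_inv]
  have hquad : h ⬝ᵥ (t ^ 2 • M)⁻¹ *ᵥ h = Qform A B h / t ^ 2 := by
    have := invertibleOfNonzero (pow_ne_zero 2 ht)
    rw [inv_smul M _ hM.det_pos.ne'.isUnit, invOf_eq_inv, smul_mulVec, dotProduct_smul, smul_eq_mul,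
      Qform, inv_mul_eq_div]
  have hdet : (π • t ^ 2 • M).det = (π * t ^ 2) ^ p * M.det := by
    rw [smul_smul, det_smul, Fintype.card_fin]
  unfold gaussianDensity phiFactor
  rw [hsum, hquad, hdet, sqrt_mul (by positivity), neg_div (2:ℝ) 1, rpow_neg hM.det_pos.le,
    ← sqrt_eq_rpow, neg_div]
  field_simp

theorem nonstationary_gaussian_kernel_posSemidef_general (p : ℕ)
    (S : (Fin p → ℝ) → Matrix (Fin p) (Fin p) ℝ) (hS : ∀ x, (S x).PosDef)
    (t : ℝ) (ht : 0 < t) :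
    ∀ (n : ℕ) (x : Fin n → (Fin p → ℝ)) (c : Fin n → ℝ),
      0 ≤ ∑ i : Fin n, ∑ j : Fin n,
        c i * c j * (phiFactor (S (x i)) (S (x j)) *
          Real.exp (-(Qform (S (x i)) (S (x j)) (x i - x j)) / t ^ 2)) := by
  intro n x c
  set P := fun i ↦ (t ^ 2 / 2) • S (x i)
  have hP : ∀ i, (P i).PosDef := fun i ↦ (hS _).smul (by positivity)
  set a := fun i ↦ (S (x i)).det ^ ((1:ℝ) / 4)
  set κ := √((π * t ^ 2) ^ p)
  have hK : ∀ i j, c i * c j * (phiFactor (S (x i)) (S (x j)) *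
      exp (-(Qform (S (x i)) (S (x j)) (x i - x j)) / t ^ 2)) =
      κ * (c i * a i * (c j * a j) *
        ∫ z, gaussianDensity (P i) (z - x i) * gaussianDensity (P j) (z - x j)) := by
    intro i j
    rw [phiFactor_mul_exp_eq (hS _) (hS _) ht.ne',
      (hP i).integral_gaussianDensity_sub_mul_gaussianDensity_sub (hP j)]
    ring
  simp_rw [hK, ← Finset.mul_sum]
  exact mul_nonneg (sqrt_nonneg _) (sum_sum_mul_integral_mul_nonneg
    (fun i j ↦ (hP i).integrable_gaussianDensity_sub_mul_gaussianDensity_sub (hP j) _ _) _)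

/-- the non-stationary Gaussian kernel
`K(x,y) = φ_xy exp(−Q_xy(x−y)/t²)` is positive semidefinite. -/
theorem nonstationary_gaussian_kernel_posSemidef (p : ℕ) (hp : 1 ≤ p)
    (S : (Fin p → ℝ) → Matrix (Fin p) (Fin p) ℝ) (hS : ∀ x, (S x).PosDef)
    (t : ℝ) (ht : 0 < t) :
    ∀ (n : ℕ) (x : Fin n → (Fin p → ℝ)) (c : Fin n → ℝ),
      0 ≤ ∑ i : Fin n, ∑ j : Fin n,
        c i * c j * (phiFactor (S (x i)) (S (x j)) *
          Real.exp (-(Qform (S (x i)) (S (x j)) (x i - x j)) / t ^ 2)) :=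
  nonstationary_gaussian_kernel_posSemidef_general p S hS t ht
end

section
/- Let p ≥ 1, let Σ : ℝ^p → PD_p(ℝ) assign to each point a real positive definite p×p matrix, let α : ℝ^p → (0,∞) and let a > 0. Define C(x,y) = π^{-p/2} det((Σ_x+Σ_y)/2)^{-1/2} ∫_0^∞ 2a² t^{−α(x)−α(y)−1} exp(−(Q_xy(x−y) + a²)/t²) dt. Then C(x,x) > 0 for every x, and for all x, y ∈ ℝ^p, writing ᾱ(x,y) = (α(x)+α(y))/2, the normalized kernel satisfies C(x,y) / ( √(C(x,x)) · √(C(y,y)) ) = φ_xy · ( Γ(ᾱ(x,y)) / √(Γ(α(x)) Γ(α(y))) ) · (1 + Q_xy(x−y)/a²)^{−ᾱ(x,y)}, where Γ denotes the real Gamma function. -/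
/-!
Substituting `t = 1/u` turns the inverse-gamma mixture into a Gamma integral, which gives the
closed form `C(x,y) = π^{-p/2} det((Σx+Σy)/2)^{-1/2} a² (Q_xy(x-y) + a²)^{-ᾱ} Γ(ᾱ)`.
On the diagonal `Q = 0`, so `C(x,x) = π^{-p/2} det(Σx)^{-1/2} a^{2-2α(x)} Γ(α(x)) > 0`, and the
normalization becomes an identity between products of positive powers, which is checked after
taking logarithms.
-/

open MeasureTheory Matrix Real

open Set

theorem integral_rpow_mul_exp_neg_div_sq {s c : ℝ} (hs : 0 < s) (hc : 0 < c) :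
    ∫ t in Ioi (0 : ℝ), t ^ (-s - 1) * exp (-c / t ^ 2) =
      c ^ (-(s / 2)) * (1 / 2) * Gamma (s / 2) := by
  have hGamma := integral_rpow_mul_exp_neg_mul_rpow two_pos (by linarith : -1 < s - 1) hc
  rw [← integral_comp_rpow_Ioi _ (neg_ne_zero.2 one_ne_zero)] at hGamma
  convert hGamma using 1
  · refine setIntegral_congr_fun measurableSet_Ioi fun t (ht : 0 < t) => ?_
    have hinv : (t ^ (-1 : ℝ)) ^ (2 : ℝ) = (t ^ 2)⁻¹ := by
      rw [← rpow_mul ht.le, ← rpow_natCast, ← rpow_neg ht.le]; norm_num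
    rw [smul_eq_mul, hinv, ← rpow_mul ht.le, abs_neg, abs_one, one_mul, ← mul_assoc,
      ← rpow_add ht]
    congr 2; ring
  · rw [sub_add_cancel, neg_div]

theorem integral_inverseGamma_mixture {b c u v : ℝ} (huv : 0 < u + v) (hc : 0 < c) :
    ∫ t in Ioi (0 : ℝ), 2 * b * t ^ (-u - v - 1) * exp (-c / t ^ 2)
      = b * c ^ (-((u + v) / 2)) * Gamma ((u + v) / 2) := by
  have hintegrand (t : ℝ) : 2 * b * t ^ (-u - v - 1) * exp (-c / t ^ 2)
      = 2 * b * (t ^ (-(u + v) - 1) * exp (-c / t ^ 2)) := by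
    rw [neg_add', mul_assoc]
  simp_rw [hintegrand]
  rw [integral_const_mul, integral_rpow_mul_exp_neg_div_sq huv hc]
  ring

theorem Matrix.PosDef.half_smul_add {n : Type*} [Fintype n] {A B : Matrix n n ℝ}
    (hA : A.PosDef) (hB : B.PosDef) : ((2 : ℝ)⁻¹ • (A + B)).PosDef :=
  (hA.add hB).smul (by norm_num)

theorem Qform_nonneg {p : ℕ} {A B : Matrix (Fin p) (Fin p) ℝ} (hA : A.PosDef) (hB : B.PosDef)
    (h : Fin p → ℝ) : 0 ≤ Qform A B h :=
  (hA.half_smul_add hB).inv.posSemidef.dotProduct_mulVec_nonneg h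

theorem normalized_mixture_eq {K A dX dY dM Q gX gY gXY u v : ℝ} (hK : 0 < K) (hA : 0 < A)
    (hdX : 0 < dX) (hdY : 0 < dY) (hdM : 0 < dM) (hQA : 0 < Q + A)
    (hgX : 0 < gX) (hgY : 0 < gY) (hgXY : 0 < gXY) :
    K * dM ^ (-(1 : ℝ) / 2) * (A * (Q + A) ^ (-((u + v) / 2)) * gXY) /
        (√(K * dX ^ (-(1 : ℝ) / 2) * (A * A ^ (-u) * gX)) *
          √(K * dY ^ (-(1 : ℝ) / 2) * (A * A ^ (-v) * gY))) =
      dX ^ ((1 : ℝ) / 4) * dY ^ ((1 : ℝ) / 4) * dM ^ (-(1 : ℝ) / 2) *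
        (gXY / √(gX * gY)) * (1 + Q / A) ^ (-((u + v) / 2)) := by
  have h1QA : 1 + Q / A = (Q + A) / A := by field_simp; ring
  rw [h1QA]
  refine log_injOn_pos (mem_Ioi.2 (by positivity)) (mem_Ioi.2 (by positivity)) ?_
  simp (disch := positivity) only [log_mul, log_div, log_rpow, log_sqrt]
  ring

theorem normalized_cauchy_nonstationary_general (p : ℕ)
    (S : (Fin p → ℝ) → Matrix (Fin p) (Fin p) ℝ) (hS : ∀ x, (S x).PosDef)
    (α : (Fin p → ℝ) → ℝ) (hα : ∀ x, 0 < α x) (a : ℝ) (ha : 0 < a)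
    (C : (Fin p → ℝ) → (Fin p → ℝ) → ℝ)
    (hC : ∀ x y, C x y = Real.pi ^ (-(p : ℝ) / 2) *
      ((2:ℝ)⁻¹ • (S x + S y)).det ^ (-(1:ℝ) / 2) *
      ∫ t in Set.Ioi (0:ℝ),
        2 * a ^ 2 * t ^ (-(α x) - α y - 1) *
          Real.exp (-(Qform (S x) (S y) (x - y) + a ^ 2) / t ^ 2)) :
    (∀ x : Fin p → ℝ, 0 < C x x) ∧
    ∀ x y : Fin p → ℝ,
      C x y / (Real.sqrt (C x x) * Real.sqrt (C y y)) =
        phiFactor (S x) (S y) *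
          (Real.Gamma ((α x + α y) / 2) /
            Real.sqrt (Real.Gamma (α x) * Real.Gamma (α y))) *
          (1 + Qform (S x) (S y) (x - y) / a ^ 2) ^ (-((α x + α y) / 2)) := by
  have hQ (x y : Fin p → ℝ) : 0 < Qform (S x) (S y) (x - y) + a ^ 2 :=
    add_pos_of_nonneg_of_pos (Qform_nonneg (hS x) (hS y) _) (pow_pos ha 2)
  have hCxy (x y : Fin p → ℝ) : C x y = π ^ (-(p : ℝ) / 2) *
      ((2 : ℝ)⁻¹ • (S x + S y)).det ^ (-(1 : ℝ) / 2) *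
      (a ^ 2 * (Qform (S x) (S y) (x - y) + a ^ 2) ^ (-((α x + α y) / 2)) *
        Gamma ((α x + α y) / 2)) := by
    rw [hC, integral_inverseGamma_mixture (add_pos (hα x) (hα y)) (hQ x y)]
  have hCxx (x : Fin p → ℝ) : C x x = π ^ (-(p : ℝ) / 2) * (S x).det ^ (-(1 : ℝ) / 2) *
      (a ^ 2 * (a ^ 2) ^ (-α x) * Gamma (α x)) := by
    rw [hCxy, Qform, sub_self, mulVec_zero, dotProduct_zero, zero_add, ← two_smul ℝ (S x),
      smul_smul, inv_mul_cancel₀ two_ne_zero, one_smul, add_self_div_two]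
  have hΓ (x : Fin p → ℝ) : 0 < Gamma (α x) := Gamma_pos_of_pos (hα x)
  refine ⟨fun x => ?_, fun x y => ?_⟩
  · have := (hS x).det_pos
    rw [hCxx]
    exact mul_pos (by positivity) (mul_pos (by positivity) (hΓ x))
  · rw [hCxy, hCxx, hCxx, phiFactor]
    exact normalized_mixture_eq (by positivity) (by positivity) (hS x).det_pos (hS y).det_pos
      ((hS x).half_smul_add (hS y)).det_pos (hQ x y) (hΓ x) (hΓ y)
      (Gamma_pos_of_pos (by linarith [hα x, hα y]))

/-- normalizing the inverse-gamma mixture yields the non-stationary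
Cauchy correlation with spatially varying long-range parameter. -/
theorem normalized_cauchy_nonstationary (p : ℕ) (hp : 1 ≤ p)
    (S : (Fin p → ℝ) → Matrix (Fin p) (Fin p) ℝ) (hS : ∀ x, (S x).PosDef)
    (α : (Fin p → ℝ) → ℝ) (hα : ∀ x, 0 < α x) (a : ℝ) (ha : 0 < a)
    (C : (Fin p → ℝ) → (Fin p → ℝ) → ℝ)
    (hC : ∀ x y, C x y = Real.pi ^ (-(p : ℝ) / 2) *
      ((2:ℝ)⁻¹ • (S x + S y)).det ^ (-(1:ℝ) / 2) *
      ∫ t in Set.Ioi (0:ℝ),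
        2 * a ^ 2 * t ^ (-(α x) - α y - 1) *
          Real.exp (-(Qform (S x) (S y) (x - y) + a ^ 2) / t ^ 2)) :
    (∀ x : Fin p → ℝ, 0 < C x x) ∧
    ∀ x y : Fin p → ℝ,
      C x y / (Real.sqrt (C x x) * Real.sqrt (C y y)) =
        phiFactor (S x) (S y) *
          (Real.Gamma ((α x + α y) / 2) /
            Real.sqrt (Real.Gamma (α x) * Real.Gamma (α y))) *
          (1 + Qform (S x) (S y) (x - y) / a ^ 2) ^ (-((α x + α y) / 2)) :=
  normalized_cauchy_nonstationary_general p S hS α hα a ha C hC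
end
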